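/- arXiv:2504.13670 — 2 statements merged into one kernel-verified Lean document; each statement's English description precedes it below -/
import Mathlib

section
/- For real numbers a in [0, Δ] with Δ > 0 and D > 0 satisfying Δ < D·√(1/3) (so that 6a² < 2D² for all a in [0,Δ]), the function S(a) = 1/(a² + D²) + 1/((Δ−a)² + D²) attains its maximum on [0, Δ] uniquely at a = Δ/2. -/
/-!
Write `a = Δ/2 + t`. With `P = (Δ/2 + t)² + D²`, `Q = (Δ/2 - t)² + D²` and `u = (Δ/2)² + D²`,
the defect `2PQ - (P + Q)u` factors as `2t²(D² + t² - 3(Δ/2)²)`, which is positive for `t ≠ 0`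
as soon as `3(Δ/2)² < D²`.
-/

theorem one_div_add_sq_add_one_div_sub_sq_lt {h t c : ℝ} (hc : 0 < c)
    (hct : 3 * h ^ 2 < c + t ^ 2) (ht : t ≠ 0) :
    1 / ((h + t) ^ 2 + c) + 1 / ((h - t) ^ 2 + c) < 2 / (h ^ 2 + c) := by
  have hP : 0 < (h + t) ^ 2 + c := by positivity
  have hQ : 0 < (h - t) ^ 2 + c := by positivity
  have hu : 0 < h ^ 2 + c := by positivity
  have defect : 2 * (((h + t) ^ 2 + c) * ((h - t) ^ 2 + c)) -
      (1 * ((h - t) ^ 2 + c) + ((h + t) ^ 2 + c) * 1) * (h ^ 2 + c) =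
      2 * t ^ 2 * (c + t ^ 2 - 3 * h ^ 2) := by ring
  have hdefect : 0 < 2 * t ^ 2 * (c + t ^ 2 - 3 * h ^ 2) :=
    mul_pos (by positivity) (sub_pos.mpr hct)
  rw [div_add_div _ _ hP.ne' hQ.ne', div_lt_div_iff₀ (mul_pos hP hQ) hu]
  linarith

theorem stmt_0_general (Δ D : ℝ) (h : 3 * Δ ^ 2 < D ^ 2) :
    ∀ a ∈ Set.Icc (0 : ℝ) Δ, a ≠ Δ / 2 →
      1 / (a ^ 2 + D ^ 2) + 1 / ((Δ - a) ^ 2 + D ^ 2) <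
        1 / ((Δ / 2) ^ 2 + D ^ 2) + 1 / ((Δ - Δ / 2) ^ 2 + D ^ 2) := by
  intro a _ hne
  have hc : 0 < D ^ 2 := by nlinarith [sq_nonneg Δ]
  have ht : a - Δ / 2 ≠ 0 := sub_ne_zero.mpr hne
  have hct : 3 * (Δ / 2) ^ 2 < D ^ 2 + (a - Δ / 2) ^ 2 := by nlinarith [sq_nonneg (a - Δ / 2)]
  have key := one_div_add_sq_add_one_div_sub_sq_lt hc hct ht
  rw [show Δ / 2 + (a - Δ / 2) = a by ring, show Δ / 2 - (a - Δ / 2) = Δ - a by ring] at key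
  rw [show Δ - Δ / 2 = Δ / 2 by ring, ← add_div, one_add_one_eq_two]
  exact key

/-- The single-gap objective `S(a) = 1/(a²+D²) + 1/((Δ−a)²+D²)` attains its maximum
on `[0, Δ]` uniquely at `a = Δ/2`, given `3Δ² < D²`. -/
theorem stmt_0 (Δ D : ℝ) (hΔ : 0 < Δ) (hD : 0 < D) (h : 3 * Δ ^ 2 < D ^ 2) :
    ∀ a ∈ Set.Icc (0 : ℝ) Δ, a ≠ Δ / 2 →
      1 / (a ^ 2 + D ^ 2) + 1 / ((Δ - a) ^ 2 + D ^ 2) <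
        1 / ((Δ / 2) ^ 2 + D ^ 2) + 1 / ((Δ - Δ / 2) ^ 2 + D ^ 2) :=
  stmt_0_general Δ D h
end

section
/- Let N be a positive integer, D > 0, Δ > 0 with (N−1)Δ < D·√(1/3). Among all real sequences x_1 < x_2 < ⋯ < x_N with x_{n} − x_{n−1} ≥ Δ for all n, the sum ∑_{n=1}^N 1/√((x_n − x_b)² + D²) is maximized by the uniform symmetric arrangement x_n = x_b − (N−1)Δ/2 + (n−1)Δ. -/
/-!
Write `f t = 1 / √(t² + D²)` and pair antenna `n` with antenna `N - 1 - n`. Their separation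
is at least `|N - 1 - 2n| Δ`, which is exactly the separation of the corresponding pair in the
uniform arrangement, placed at `±p`. So it suffices that `f a + f b ≤ 2 f p` whenever
`b - a ≥ 2p ≥ 0` and `3p² ≤ D²`. Moving `a` and `b` towards the origin reduces this to
`f (m - p) + f (m + p) ≤ 2 f p`, and by `(u + v)² ≤ 2 (u² + v²)` it is enough to prove it for the
squares `1 / (t² + D²)`, where clearing denominators leaves `m² (m² + D² - 3p²) ≥ 0`.
-/

open Finset

noncomputable def invDist (D t : ℝ) : ℝ := 1 / √(t ^ 2 + D ^ 2)

section InvDist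

variable {D : ℝ}

lemma invDist_abs (t : ℝ) : invDist D |t| = invDist D t := by
  rw [invDist, invDist, sq_abs]

lemma invDist_nonneg (t : ℝ) : 0 ≤ invDist D t := by
  unfold invDist; positivity

lemma invDist_sq (hD : D ≠ 0) (t : ℝ) : invDist D t ^ 2 = 1 / (t ^ 2 + D ^ 2) := by
  rw [invDist, div_pow, one_pow, Real.sq_sqrt (by positivity)]

lemma invDist_le_invDist_of_sq_le (hD : D ≠ 0) {s t : ℝ} (h : s ^ 2 ≤ t ^ 2) :
    invDist D t ≤ invDist D s :=
  one_div_le_one_div_of_le (by positivity) (Real.sqrt_le_sqrt (by linarith))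

lemma add_le_two_mul_of_sq_add_sq_le {u v w : ℝ} (hw : 0 ≤ w) (h : u ^ 2 + v ^ 2 ≤ 2 * w ^ 2) :
    u + v ≤ 2 * w := by
  nlinarith [sq_nonneg (u - v)]

lemma invDist_sub_add_invDist_add_le (hD : D ≠ 0) {p : ℝ} (hp : 3 * p ^ 2 ≤ D ^ 2) (m : ℝ) :
    invDist D (m - p) + invDist D (m + p) ≤ 2 * invDist D p := by
  refine add_le_two_mul_of_sq_add_sq_le (invDist_nonneg p) ?_
  rw [invDist_sq hD, invDist_sq hD, invDist_sq hD, div_add_div _ _ (by positivity) (by positivity),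
    mul_one_div, div_le_div_iff₀ (by positivity) (by positivity)]
  have hnum : 0 ≤ m ^ 2 * (m ^ 2 + (D ^ 2 - 3 * p ^ 2)) := by
    have := sub_nonneg.2 hp
    positivity
  linarith

lemma exists_sq_le_of_two_mul_le_sub {a b p : ℝ} (hp : 0 ≤ p) (hab : 2 * p ≤ b - a) :
    ∃ m, (m - p) ^ 2 ≤ a ^ 2 ∧ (m + p) ^ 2 ≤ b ^ 2 := by
  rcases le_or_gt 0 (a + p) with ha | ha
  · exact ⟨a + p, by ring_nf; rfl, by nlinarith⟩
  rcases le_or_gt (b - p) 0 with hb | hb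
  · exact ⟨b - p, by nlinarith, by ring_nf; rfl⟩
  · exact ⟨0, by nlinarith, by nlinarith⟩

lemma invDist_add_invDist_le (hD : D ≠ 0) {a b p : ℝ} (hp : 3 * p ^ 2 ≤ D ^ 2)
    (hab : 2 * |p| ≤ |b - a|) : invDist D a + invDist D b ≤ 2 * invDist D p := by
  wlog hle : a ≤ b generalizing a b
  · rw [add_comm]
    exact this (by rwa [abs_sub_comm]) (le_of_not_ge hle)
  rw [abs_of_nonneg (sub_nonneg.2 hle)] at hab
  obtain ⟨m, ha, hb⟩ := exists_sq_le_of_two_mul_le_sub (abs_nonneg p) hab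
  rw [← invDist_abs p]
  calc invDist D a + invDist D b ≤ invDist D (m - |p|) + invDist D (m + |p|) :=
        add_le_add (invDist_le_invDist_of_sq_le hD ha) (invDist_le_invDist_of_sq_le hD hb)
    _ ≤ 2 * invDist D |p| := invDist_sub_add_invDist_add_le hD (by rwa [sq_abs]) m

end InvDist

def Spaced (N : ℕ) (Δ : ℝ) (x : ℕ → ℝ) : Prop := ∀ n, n + 1 < N → Δ ≤ x (n + 1) - x n

namespace Spaced

variable {N : ℕ} {Δ : ℝ} {x : ℕ → ℝ}

lemma sub_mul_le (hx : Spaced N Δ x) {i j : ℕ} (hij : i ≤ j) (hj : j < N) :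
    ((j : ℝ) - i) * Δ ≤ x j - x i := by
  induction j, hij using Nat.le_induction with
  | base => simp
  | succ j hij ih =>
    have := hx j hj
    have := ih (by omega)
    push_cast
    linarith

lemma abs_sub_mul_le (hx : Spaced N Δ x) {i j : ℕ} (hi : i < N) (hj : j < N) :
    |(j : ℝ) - i| * Δ ≤ |x j - x i| := by
  wlog hij : i ≤ j generalizing i j
  · rw [abs_sub_comm, abs_sub_comm (x j)]
    exact this hj hi (le_of_not_ge hij)
  rw [abs_of_nonneg (sub_nonneg.2 (Nat.cast_le.2 hij))]
  exact (hx.sub_mul_le hij hj).trans (le_abs_self _)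

end Spaced

lemma sum_range_le_of_add_reflect_le {𝕜 : Type*} [Field 𝕜] [LinearOrder 𝕜]
    [IsStrictOrderedRing 𝕜] {N : ℕ} {f g : ℕ → 𝕜} (h : ∀ n < N, f n + f (N - 1 - n) ≤ 2 * g n) :
    ∑ n ∈ range N, f n ≤ ∑ n ∈ range N, g n := by
  have := sum_le_sum fun n hn => h n (mem_range.1 hn)
  rw [sum_add_distrib, sum_range_reflect, ← mul_sum] at this
  linarith

theorem stmt_3_general (N : ℕ) (D Δ xb : ℝ) (hD : 0 < D) (hΔ : 0 < Δ)
    (hcond : 3 * (((N : ℝ) - 1) * Δ) ^ 2 < D ^ 2)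
    (x : ℕ → ℝ) (hx : ∀ n, n + 1 < N → Δ ≤ x (n + 1) - x n) :
    ∑ n ∈ Finset.range N, 1 / Real.sqrt ((x n - xb) ^ 2 + D ^ 2) ≤
      ∑ n ∈ Finset.range N,
        1 / Real.sqrt (((xb - ((N : ℝ) - 1) * Δ / 2 + (n : ℝ) * Δ) - xb) ^ 2 + D ^ 2) := by
  set c : ℕ → ℝ := fun n => (xb - ((N : ℝ) - 1) * Δ / 2 + (n : ℝ) * Δ) - xb
  refine sum_range_le_of_add_reflect_le (f := fun n => invDist D (x n - xb))
    (g := fun n => invDist D (c n)) fun n hn => ?_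
  have hmirror : ((N - 1 - n : ℕ) : ℝ) = N - 1 - n := by
    rw [Nat.cast_sub (by omega), Nat.cast_sub (by omega), Nat.cast_one]
  have htwice : 2 * c n = -((((N - 1 - n : ℕ) : ℝ) - n) * Δ) := by
    rw [hmirror]; ring
  have hgap : 2 * |c n| ≤ |(x (N - 1 - n) - xb) - (x n - xb)| := by
    rw [← abs_two, ← abs_mul, htwice, abs_neg, abs_mul, abs_of_pos hΔ, sub_sub_sub_cancel_right]
    exact Spaced.abs_sub_mul_le hx hn (by omega)
  have hsmall : 3 * c n ^ 2 ≤ D ^ 2 := by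
    have hsq : 4 * c n ^ 2 = (((N : ℝ) - 1) * Δ) ^ 2 - 4 * n * (N - 1 - n : ℕ) * Δ ^ 2 := by
      rw [hmirror]; ring
    have : (0 : ℝ) ≤ 4 * n * (N - 1 - n : ℕ) * Δ ^ 2 := by positivity
    linarith [sq_nonneg (c n)]
  exact invDist_add_invDist_le hD.ne' hsmall hgap

/-- Among antenna placements `x 0 < x 1 < ⋯ < x (N-1)` with minimum spacing `Δ`,
the sum of inverse distances to the user is maximized by the uniform symmetric
arrangement centered at `x_b` with spacing `Δ`, provided `3((N−1)Δ)² < D²`. -/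
theorem stmt_3 (N : ℕ) (hN : 0 < N) (D Δ xb : ℝ) (hD : 0 < D) (hΔ : 0 < Δ)
    (hcond : 3 * (((N : ℝ) - 1) * Δ) ^ 2 < D ^ 2)
    (x : ℕ → ℝ) (hx : ∀ n, n + 1 < N → Δ ≤ x (n + 1) - x n) :
    ∑ n ∈ Finset.range N, 1 / Real.sqrt ((x n - xb) ^ 2 + D ^ 2) ≤
      ∑ n ∈ Finset.range N,
        1 / Real.sqrt (((xb - ((N : ℝ) - 1) * Δ / 2 + (n : ℝ) * Δ) - xb) ^ 2 + D ^ 2) :=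
  stmt_3_general N D Δ xb hD hΔ hcond x hx
end
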